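/- arXiv:1507.05250 — 3 statements merged into one kernel-verified Lean document; each statement's English description precedes it below -/
import Mathlib

section
/- Let σ ≥ 1 and a > 0. For every δ with 0 < δ < 1 and every t with 0 ≤ t < a(1-δ)^σ/(2^σ - 1), one has the strict inequality 1 - δ > (1/2)^{1+1/σ} { [(1-δ)^σ - t/a]^{1/σ} + [(1-δ)^σ + (2^{σ+1}-1) t/a]^{1/σ} }. -/
/-!
With `A = (1-δ)^σ` and `s = t/a`, the two radicands `u = A - s` and `v = A + (2^{σ+1}-1)s`
average to `A + (2^σ-1)s`, which is `< 2A` by the bound on `t`. Concavity of `r ↦ r^{1/σ}`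
then bounds `(u^{1/σ} + v^{1/σ})/2` by `((u+v)/2)^{1/σ} < (2A)^{1/σ} = 2^{1/σ}(1-δ)`.
-/

open Real

theorem add_rpow_div_two_le_rpow_add_div_two {p u v : ℝ} (hp₀ : 0 ≤ p) (hp₁ : p ≤ 1)
    (hu : 0 ≤ u) (hv : 0 ≤ v) : (u ^ p + v ^ p) / 2 ≤ ((u + v) / 2) ^ p := by
  have := (concaveOn_rpow hp₀ hp₁).2 (Set.mem_Ici.2 hu) (Set.mem_Ici.2 hv)
    (by norm_num : (0 : ℝ) ≤ 1 / 2) (by norm_num : (0 : ℝ) ≤ 1 / 2) (by norm_num)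
  simp only [smul_eq_mul] at this
  rw [show (u + v) / 2 = 1 / 2 * u + 1 / 2 * v by ring]
  linarith

theorem half_rpow_mul_add_rpow_inv_lt {p u v c : ℝ} (hp : 1 ≤ p) (hu : 0 ≤ u) (hv : 0 ≤ v)
    (hc : 0 ≤ c) (h : u + v < 4 * c ^ p) :
    (1 / 2 : ℝ) ^ (1 + 1 / p) * (u ^ (1 / p) + v ^ (1 / p)) < c := by
  have hp₀ : 0 < p := by linarith
  calc (1 / 2 : ℝ) ^ (1 + 1 / p) * (u ^ (1 / p) + v ^ (1 / p))
      = (1 / 2 : ℝ) ^ (1 / p) * ((u ^ (1 / p) + v ^ (1 / p)) / 2) := by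
        rw [rpow_add (by norm_num), rpow_one]; ring
    _ ≤ (1 / 2 : ℝ) ^ (1 / p) * ((u + v) / 2) ^ (1 / p) := by
        gcongr
        exact add_rpow_div_two_le_rpow_add_div_two (by positivity) (div_le_one_of_le₀ hp hp₀.le) hu hv
    _ = ((u + v) / 4) ^ (1 / p) := by
        rw [← mul_rpow (by norm_num) (by positivity)]; ring_nf
    _ < (c ^ p) ^ (1 / p) := by gcongr; linarith
    _ = c := by rw [← rpow_mul hc, mul_one_div_cancel hp₀.ne', rpow_one]

theorem ovsyannikov_aux_ineq_general (σ a δ t : ℝ) (hσ : 1 ≤ σ) (ha : 0 < a)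
    (hδ1 : δ < 1) (ht0 : 0 ≤ t)
    (ht : t < a * (1 - δ) ^ σ / ((2 : ℝ) ^ σ - 1)) :
    (1 / 2 : ℝ) ^ (1 + 1 / σ) *
        (((1 - δ) ^ σ - t / a) ^ (1 / σ) +
          ((1 - δ) ^ σ + ((2 : ℝ) ^ (σ + 1) - 1) * (t / a)) ^ (1 / σ)) <
      1 - δ := by
  set A := (1 - δ) ^ σ
  set s := t / a
  have hs₀ : 0 ≤ s := div_nonneg ht0 ha.le
  have h2σ : 2 ≤ (2 : ℝ) ^ σ := by simpa using rpow_le_rpow_of_exponent_le one_le_two hσ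
  have hs : ((2 : ℝ) ^ σ - 1) * s < A := by
    have : s < A / ((2 : ℝ) ^ σ - 1) := by
      rwa [div_lt_iff₀ ha, div_mul_eq_mul_div, mul_comm]
    rwa [lt_div_iff₀ (by linarith), mul_comm] at this
  have h2σ1 : (2 : ℝ) ^ (σ + 1) = 2 * 2 ^ σ := by rw [rpow_add two_pos, rpow_one, mul_comm]
  refine half_rpow_mul_add_rpow_inv_lt hσ (by nlinarith) (by rw [h2σ1]; nlinarith)
    (by linarith) ?_
  rw [h2σ1]
  linarith

/-- Lemma 3.4 of the paper: for `σ ≥ 1`, `a > 0`, `0 < δ < 1` and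
`0 ≤ t < a(1-δ)^σ/(2^σ-1)` one has
`1 - δ > (1/2)^{1+1/σ} ([(1-δ)^σ - t/a]^{1/σ} + [(1-δ)^σ + (2^{σ+1}-1) t/a]^{1/σ})`. -/
theorem ovsyannikov_aux_ineq (σ a δ t : ℝ) (hσ : 1 ≤ σ) (ha : 0 < a)
    (hδ0 : 0 < δ) (hδ1 : δ < 1) (ht0 : 0 ≤ t)
    (ht : t < a * (1 - δ) ^ σ / ((2 : ℝ) ^ σ - 1)) :
    (1 / 2 : ℝ) ^ (1 + 1 / σ) *
        (((1 - δ) ^ σ - t / a) ^ (1 / σ) +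
          ((1 - δ) ^ σ + ((2 : ℝ) ^ (σ + 1) - 1) * (t / a)) ^ (1 / σ)) <
      1 - δ :=
  ovsyannikov_aux_ineq_general σ a δ t hσ ha hδ1 ht0 ht
end

section
/- Let σ ≥ 1, a > 0, 0 < δ < 1 and 0 ≤ t < a(1-δ)^σ/(2^σ - 1). For τ ∈ [0, t] define δ(τ) = (1/2)(1+δ) + (1/2)^{2+1/σ} { [(1-δ)^σ - τ/a]^{1/σ} - [(1-δ)^σ + (2^{σ+1}-1) τ/a]^{1/σ} }. Then for every τ ∈ [0, t]: (i) δ(τ) - δ ≥ (1/2)^{1+1/σ} [(1-δ)^σ - τ/a]^{1/σ}; (ii) 1 - δ(τ) ≥ (1/2)^{1+1/σ} [(1-δ)^σ + (2^{σ+1}-1) τ/a]^{1/σ}; and (iii) a(1-δ(τ))^σ - τ ≥ (1/2)^{σ+1} (a(1-δ)^σ - τ). -/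
/-!
Write `C = 1 - δ`, `s = τ / a`, `A = C^σ - s` and `B = C^σ + (2^{σ+1} - 1) s`. The hypothesis on `t`
gives `(2^σ - 1) s ≤ C^σ`, hence `A, B ≥ 0` and `A + B ≤ 4 C^σ`. Concavity of `x ↦ x^{1/σ}` then
yields `A^{1/σ} + B^{1/σ} ≤ 2^{1+1/σ} C`, which is exactly what (i) and (ii) need once `δ(τ)` is
unfolded. Raising (ii) to the power `σ` gives `a (1 - δ(τ))^σ ≥ 2^{-σ-1} a B`, and
`a B = (a C^σ - τ) + 2^{σ+1} τ` turns this into (iii).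
-/

open Real

namespace Real

lemma rpow_add_rpow_le_two_mul_rpow_half {x y p : ℝ} (hx : 0 ≤ x) (hy : 0 ≤ y) (hp₀ : 0 ≤ p)
    (hp₁ : p ≤ 1) : x ^ p + y ^ p ≤ 2 * ((x + y) / 2) ^ p := by
  have h := (concaveOn_rpow hp₀ hp₁).2 (Set.mem_Ici.2 hx) (Set.mem_Ici.2 hy)
    (by norm_num : (0 : ℝ) ≤ 1 / 2) (by norm_num : (0 : ℝ) ≤ 1 / 2) (add_halves 1)
  simp only [smul_eq_mul] at h
  rw [show 1 / 2 * x + 1 / 2 * y = (x + y) / 2 by ring] at h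
  linarith

lemma rpow_inv_add_rpow_inv_le_of_add_le {x y z σ : ℝ} (hσ : 1 ≤ σ) (hx : 0 ≤ x) (hy : 0 ≤ y)
    (hz : 0 ≤ z) (h : x + y ≤ 4 * z ^ σ) : x ^ (1 / σ) + y ^ (1 / σ) ≤ 2 ^ (1 + 1 / σ) * z := by
  have hσ₀ : 0 < σ := by linarith
  calc x ^ (1 / σ) + y ^ (1 / σ) ≤ 2 * ((x + y) / 2) ^ (1 / σ) :=
        rpow_add_rpow_le_two_mul_rpow_half hx hy (by positivity) (div_le_one_of_le₀ hσ hσ₀.le)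
    _ ≤ 2 * (2 * z ^ σ) ^ (1 / σ) := by gcongr; linarith
    _ = 2 ^ (1 + 1 / σ) * z := by
        rw [mul_rpow zero_le_two (by positivity), one_div, rpow_rpow_inv hz hσ₀.ne',
          rpow_add two_pos, rpow_one, mul_assoc]

lemma mul_rpow_le_rpow_of_rpow_mul_rpow_inv_le {c B x σ : ℝ} (hσ : 0 < σ) (hc : 0 ≤ c)
    (hB : 0 ≤ B) (h : c ^ (1 + 1 / σ) * B ^ (1 / σ) ≤ x) : c ^ (σ + 1) * B ≤ x ^ σ := by
  have hexp : (1 + 1 / σ) * σ = σ + 1 := by field_simp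
  calc c ^ (σ + 1) * B = (c ^ (1 + 1 / σ) * B ^ (1 / σ)) ^ σ := by
        rw [mul_rpow (by positivity) (by positivity), ← rpow_mul hc, hexp, one_div,
          rpow_inv_rpow hB hσ.ne']
    _ ≤ x ^ σ := rpow_le_rpow (by positivity) h hσ.le

end Real

lemma one_half_rpow_one_add (q : ℝ) : (1 / 2 : ℝ) ^ (1 + q) = 2 * (1 / 2) ^ (2 + q) := by
  rw [show (2 : ℝ) + q = 1 + q + 1 by ring, rpow_add_one (by norm_num)]
  ring

lemma one_half_rpow_two_add_mul_two_rpow_one_add (q : ℝ) :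
    (1 / 2 : ℝ) ^ (2 + q) * 2 ^ (1 + q) = 1 / 2 := by
  rw [show (2 : ℝ) + q = 1 + (1 + q) by ring, rpow_add (by norm_num), rpow_one, mul_assoc,
    ← mul_rpow (by norm_num) zero_le_two]
  norm_num

lemma sub_nonneg_and_add_le_four_mul_of_mul_le {σ s K : ℝ} (hσ : 1 ≤ σ) (hs₀ : 0 ≤ s)
    (hs : s * (2 ^ σ - 1) ≤ K) :
    0 ≤ K - s ∧ 0 ≤ K + (2 ^ (σ + 1) - 1) * s ∧ K - s + (K + (2 ^ (σ + 1) - 1) * s) ≤ 4 * K := by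
  have h2σ : (2 : ℝ) ≤ 2 ^ σ := by simpa using rpow_le_rpow_of_exponent_le one_le_two hσ
  have h2σ₁ : (2 : ℝ) ^ (σ + 1) = 2 * 2 ^ σ := by rw [rpow_add two_pos, rpow_one, mul_comm]
  exact ⟨by nlinarith, by nlinarith, by nlinarith⟩

lemma half_rpow_mul_sub_le_of_half_rpow_mul_le {σ a K τ y : ℝ} (ha : 0 < a)
    (h : (1 / 2 : ℝ) ^ (σ + 1) * (K + (2 ^ (σ + 1) - 1) * (τ / a)) ≤ y) :
    (1 / 2 : ℝ) ^ (σ + 1) * (a * K - τ) ≤ a * y - τ := by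
  have h2inv : (1 / 2 : ℝ) ^ (σ + 1) * 2 ^ (σ + 1) = 1 := by
    rw [← mul_rpow (by norm_num) zero_le_two]; norm_num
  have hexpand : a * ((1 / 2 : ℝ) ^ (σ + 1) * (K + (2 ^ (σ + 1) - 1) * (τ / a))) =
      (1 / 2) ^ (σ + 1) * (a * K - τ) + τ := by
    field_simp
    linear_combination τ * h2inv
  nlinarith [mul_le_mul_of_nonneg_left h ha.le]

theorem ovsyannikov_delta_bounds_general (σ a δ t : ℝ) (hσ : 1 ≤ σ) (ha : 0 < a)
    (hδ1 : δ < 1)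
    (ht : t < a * (1 - δ) ^ σ / ((2 : ℝ) ^ σ - 1))
    (dlt : ℝ → ℝ)
    (hdlt : ∀ τ : ℝ, dlt τ =
      (1 / 2) * (1 + δ) + (1 / 2 : ℝ) ^ (2 + 1 / σ) *
        (((1 - δ) ^ σ - τ / a) ^ (1 / σ) -
          ((1 - δ) ^ σ + ((2 : ℝ) ^ (σ + 1) - 1) * (τ / a)) ^ (1 / σ))) :
    ∀ τ ∈ Set.Icc (0 : ℝ) t,
      (1 / 2 : ℝ) ^ (1 + 1 / σ) * ((1 - δ) ^ σ - τ / a) ^ (1 / σ) ≤ dlt τ - δ ∧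
      (1 / 2 : ℝ) ^ (1 + 1 / σ) *
          ((1 - δ) ^ σ + ((2 : ℝ) ^ (σ + 1) - 1) * (τ / a)) ^ (1 / σ) ≤ 1 - dlt τ ∧
      (1 / 2 : ℝ) ^ (σ + 1) * (a * (1 - δ) ^ σ - τ) ≤ a * (1 - dlt τ) ^ σ - τ := by
  rintro τ ⟨hτ₀, hτt⟩
  have hs : τ / a * (2 ^ σ - 1) ≤ (1 - δ) ^ σ := by
    have h2σ : (1 : ℝ) < 2 ^ σ := one_lt_rpow one_lt_two (by linarith)
    rw [lt_div_iff₀ (by linarith)] at ht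
    rw [div_mul_eq_mul_div, div_le_iff₀ ha]
    nlinarith
  set A := (1 - δ) ^ σ - τ / a
  set B := (1 - δ) ^ σ + ((2 : ℝ) ^ (σ + 1) - 1) * (τ / a)
  obtain ⟨hA₀, hB₀, hAB⟩ := sub_nonneg_and_add_le_four_mul_of_mul_le hσ (div_nonneg hτ₀ ha.le) hs
  have hsum := rpow_inv_add_rpow_inv_le_of_add_le hσ hA₀ hB₀ (by linarith) hAB
  have hhalf : (1 / 2 : ℝ) ^ (2 + 1 / σ) * (A ^ (1 / σ) + B ^ (1 / σ)) ≤ (1 - δ) / 2 := by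
    have := mul_le_mul_of_nonneg_left hsum (by positivity : (0 : ℝ) ≤ (1 / 2) ^ (2 + 1 / σ))
    rwa [← mul_assoc, one_half_rpow_two_add_mul_two_rpow_one_add, ← mul_div_right_comm,
      one_mul] at this
  have hi : (1 / 2 : ℝ) ^ (1 + 1 / σ) * A ^ (1 / σ) ≤ dlt τ - δ := by
    rw [hdlt τ, one_half_rpow_one_add]; linarith
  have hii : (1 / 2 : ℝ) ^ (1 + 1 / σ) * B ^ (1 / σ) ≤ 1 - dlt τ := by
    rw [hdlt τ, one_half_rpow_one_add]; linarith
  refine ⟨hi, hii, half_rpow_mul_sub_le_of_half_rpow_mul_le ha ?_⟩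
  exact mul_rpow_le_rpow_of_rpow_mul_rpow_inv_le (by linarith) (by norm_num) hB₀ hii

/-- Inequalities (3.7), (3.8) and (3.10) from the proof of Lemma 3.5 of the paper,
for the auxiliary function
`δ(τ) = (1/2)(1+δ) + (1/2)^{2+1/σ} ([(1-δ)^σ - τ/a]^{1/σ} - [(1-δ)^σ + (2^{σ+1}-1)τ/a]^{1/σ})`. -/
theorem ovsyannikov_delta_bounds (σ a δ t : ℝ) (hσ : 1 ≤ σ) (ha : 0 < a)
    (hδ0 : 0 < δ) (hδ1 : δ < 1) (ht0 : 0 ≤ t)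
    (ht : t < a * (1 - δ) ^ σ / ((2 : ℝ) ^ σ - 1))
    (dlt : ℝ → ℝ)
    (hdlt : ∀ τ : ℝ, dlt τ =
      (1 / 2) * (1 + δ) + (1 / 2 : ℝ) ^ (2 + 1 / σ) *
        (((1 - δ) ^ σ - τ / a) ^ (1 / σ) -
          ((1 - δ) ^ σ + ((2 : ℝ) ^ (σ + 1) - 1) * (τ / a)) ^ (1 / σ))) :
    ∀ τ ∈ Set.Icc (0 : ℝ) t,
      (1 / 2 : ℝ) ^ (1 + 1 / σ) * ((1 - δ) ^ σ - τ / a) ^ (1 / σ) ≤ dlt τ - δ ∧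
      (1 / 2 : ℝ) ^ (1 + 1 / σ) *
          ((1 - δ) ^ σ + ((2 : ℝ) ^ (σ + 1) - 1) * (τ / a)) ^ (1 / σ) ≤ 1 - dlt τ ∧
      (1 / 2 : ℝ) ^ (σ + 1) * (a * (1 - δ) ^ σ - τ) ≤ a * (1 - dlt τ) ^ σ - τ :=
  ovsyannikov_delta_bounds_general σ a δ t hσ ha hδ1 ht dlt hdlt
end

section
/- Let σ ≥ 1, a > 0, K ≥ 0, 0 < δ < 1 and 0 ≤ t < a(1-δ)^σ/(2^σ - 1). For τ ∈ [0, t] define δ(τ) = (1/2)(1+δ) + (1/2)^{2+1/σ} { [(1-δ)^σ - τ/a]^{1/σ} - [(1-δ)^σ + (2^{σ+1}-1) τ/a]^{1/σ} }, and note δ < δ(τ) < 1. Suppose h : [0, t] → [0, ∞) is a measurable function satisfying h(τ) ≤ K / ( (1-δ(τ))^σ √(1 - τ/(a(1-δ(τ))^σ)) ) for all τ ∈ [0, t]. Then ∫₀ᵗ h(τ)/(δ(τ) - δ)^σ dτ ≤ (a · 2^{2σ+3} K / (1-δ)^σ) · √( a(1-δ)^σ / (a(1-δ)^σ - t) ).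 -/
/-!
Write `b = (1-δ)^σ`, `A = b - τ/a`, `B = b + (2^(σ+1)-1) τ/a`, so that
`δ(τ) = (1+δ)/2 + 2^(-2-1/σ) (A^(1/σ) - B^(1/σ))`. For `τ ≤ t` the condition on `t` amounts to
`A + B < 4b`, so concavity of `x ↦ x^(1/σ)` gives `2^(-2-1/σ) (A^(1/σ) + B^(1/σ)) ≤ (1-δ)/2`.
Hence both gaps `δ(τ) - δ` and `1 - δ(τ)` exceed `2^(-1-1/σ)` times `A^(1/σ)`, resp. `B^(1/σ)`,
and after raising to the power `σ`: `(δ(τ)-δ)^σ ≥ 2^(-σ-1) (ab-τ)/a` and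
`(1-δ(τ))^σ ≥ 2^(-σ-1) B`. The second bound makes the denominator in the bound on `h` at least
`2^(-σ-1) √(b(ab-τ)/a)`, so the integrand is at most a constant times `(ab-τ)^(-3/2)`, whose
integral over `[0,t]` is at most `2 (ab-t)^(-1/2)`.
-/

open MeasureTheory Real Set

lemma rpow_add_rpow_le_two_mul_half_add_rpow {x y s : ℝ} (hx : 0 ≤ x) (hy : 0 ≤ y)
    (hs₀ : 0 ≤ s) (hs₁ : s ≤ 1) : x ^ s + y ^ s ≤ 2 * ((x + y) / 2) ^ s := by
  have h := (concaveOn_rpow hs₀ hs₁).2 (mem_Ici.2 hx) (mem_Ici.2 hy)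
    (by norm_num : (0 : ℝ) ≤ 1 / 2) (by norm_num : (0 : ℝ) ≤ 1 / 2) (by norm_num)
  simp only [smul_eq_mul] at h
  rw [show 1 / 2 * x + 1 / 2 * y = (x + y) / 2 by ring] at h
  linarith

lemma half_rpow_mul_le_rpow {σ x y : ℝ} (hσ : 0 < σ) (hx : 0 ≤ x) (hy : 0 ≤ y)
    (h : (1 / 2 : ℝ) ^ (1 + 1 / σ) * x ^ (1 / σ) ≤ y) : (1 / 2 : ℝ) ^ (σ + 1) * x ≤ y ^ σ := by
  have hsplit : (1 / 2 : ℝ) ^ (1 + 1 / σ) * x ^ (1 / σ) = ((1 / 2 : ℝ) ^ (σ + 1) * x) ^ σ⁻¹ := by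
    rw [mul_rpow (by positivity) hx, ← rpow_mul (by norm_num), one_div σ,
      show (σ + 1) * σ⁻¹ = 1 + σ⁻¹ by field_simp]
  rw [hsplit] at h
  exact (rpow_inv_le_iff_of_pos (by positivity) hy hσ).1 h

lemma le_mul_sqrt_one_sub_div {a b τ E P : ℝ} (ha : 0 < a) (hE : 0 ≤ E)
    (hτ : τ ≤ a * b) (hP₀ : 0 < P) (hP : E * b ≤ P) (hPτ : E * (a * b - τ) ≤ a * P - τ) :
    E * √(b * (a * b - τ) / a) ≤ P * √(1 - τ / (a * P)) := by
  have hl : E * √(b * (a * b - τ) / a) = √(E * b * (E * (a * b - τ)) / a) := by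
    rw [show E * b * (E * (a * b - τ)) / a = E ^ 2 * (b * (a * b - τ) / a) by ring,
      sqrt_mul (sq_nonneg E), sqrt_sq hE]
  have hr : P * √(1 - τ / (a * P)) = √(P * (a * P - τ) / a) := by
    rw [show P * (a * P - τ) / a = P ^ 2 * (1 - τ / (a * P)) by field_simp,
      sqrt_mul (sq_nonneg P), sqrt_sq hP₀.le]
  rw [hl, hr]
  gcongr

lemma one_le_two_rpow_sub_one {σ : ℝ} (hσ : 1 ≤ σ) : 1 ≤ (2 : ℝ) ^ σ - 1 := by
  linarith [rpow_le_rpow_of_exponent_le one_le_two hσ, rpow_one (2 : ℝ)]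

lemma intervalIntegral.integral_mono_on_of_nonneg {f g : ℝ → ℝ} {a b : ℝ} (hab : a ≤ b)
    (hg : IntervalIntegrable g volume a b) (hf : ∀ x ∈ Icc a b, 0 ≤ f x)
    (hfg : ∀ x ∈ Icc a b, f x ≤ g x) : ∫ x in a..b, f x ≤ ∫ x in a..b, g x := by
  rw [intervalIntegral.integral_of_le hab, intervalIntegral.integral_of_le hab]
  exact integral_mono_of_nonneg
    (ae_restrict_of_forall_mem measurableSet_Ioc fun x hx => hf x (Ioc_subset_Icc_self hx))
    ((intervalIntegrable_iff_integrableOn_Ioc_of_le hab).1 hg)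
    (ae_restrict_of_forall_mem measurableSet_Ioc fun x hx => hfg x (Ioc_subset_Icc_self hx))

lemma intervalIntegrable_sub_rpow {L t r : ℝ} (ht : 0 ≤ t) (htL : t < L) :
    IntervalIntegrable (fun τ => (L - τ) ^ r) volume 0 t := by
  refine (ContinuousOn.rpow_const (f := fun τ => L - τ) (by fun_prop) ?_).intervalIntegrable
  intro x hx
  rw [uIcc_of_le ht] at hx
  exact Or.inl (by linarith [hx.2])

lemma integral_sub_rpow_neg_three_halves_le {L t : ℝ} (ht : 0 ≤ t) (htL : t < L) :
    ∫ τ in (0 : ℝ)..t, (L - τ) ^ (-(3 / 2) : ℝ) ≤ 2 / √(L - t) := by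
  rw [intervalIntegral.integral_comp_sub_left (fun x => x ^ (-(3 / 2) : ℝ)), sub_zero,
    integral_rpow (Or.inr ⟨by norm_num, notMem_uIcc_of_lt (by linarith) (by linarith)⟩),
    show (-(3 / 2) + 1 : ℝ) = -(1 / 2) by norm_num, rpow_neg (by linarith), rpow_neg (by linarith),
    ← sqrt_eq_rpow, ← sqrt_eq_rpow]
  have : 0 ≤ (√L)⁻¹ := by positivity
  have : ((√L)⁻¹ - (√(L - t))⁻¹) / (-(1 / 2)) = 2 / √(L - t) - 2 * (√L)⁻¹ := by ring
  linarith

namespace Ovsyannikov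

lemma gap_rpow_bounds {σ δ A B d : ℝ} (hσ : 1 ≤ σ) (hδ : δ < 1) (hA : 0 ≤ A) (hB : 0 ≤ B)
    (hAB : A + B ≤ 4 * (1 - δ) ^ σ)
    (hd : d = 1 / 2 * (1 + δ) + (1 / 2 : ℝ) ^ (2 + 1 / σ) * (A ^ (1 / σ) - B ^ (1 / σ))) :
    (1 / 2 : ℝ) ^ (σ + 1) * A ≤ (d - δ) ^ σ ∧ (1 / 2 : ℝ) ^ (σ + 1) * B ≤ (1 - d) ^ σ := by
  have hσ₀ : 0 < σ := by linarith
  set s := 1 / σ with hs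
  have hs₀ : 0 ≤ s := by positivity
  have hs₁ : s ≤ 1 := by rw [hs, div_le_one hσ₀]; exact hσ
  have hc : (1 / 2 : ℝ) ^ (2 + s) = (1 / 2 : ℝ) ^ (1 + s) / 2 := by
    rw [show 2 + s = 1 + (1 + s) by ring, rpow_add (by norm_num), rpow_one]; ring
  have hmean : (A + B) / 2 ≤ 2 * (1 - δ) ^ σ := by linarith
  have hroot : (2 * (1 - δ) ^ σ) ^ s = 2 ^ s * (1 - δ) := by
    rw [mul_rpow (by norm_num) (by positivity), hs, one_div, rpow_rpow_inv (by linarith) hσ₀.ne']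
  have hhalf : (1 / 2 : ℝ) ^ (1 + s) * 2 ^ s = 1 / 2 := by
    rw [rpow_add (by norm_num), rpow_one, mul_assoc, ← mul_rpow (by norm_num) (by norm_num)]
    norm_num
  have hsum : (1 / 2 : ℝ) ^ (1 + s) * (A ^ s + B ^ s) ≤ 1 - δ := by
    calc (1 / 2 : ℝ) ^ (1 + s) * (A ^ s + B ^ s)
        ≤ (1 / 2 : ℝ) ^ (1 + s) * (2 * (2 * (1 - δ) ^ σ) ^ s) := by
          gcongr
          exact (rpow_add_rpow_le_two_mul_half_add_rpow hA hB hs₀ hs₁).trans (by gcongr)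
      _ = 1 - δ := by rw [hroot]; linear_combination (2 * (1 - δ)) * hhalf
  rw [hc] at hd
  have hAs : 0 ≤ (1 / 2 : ℝ) ^ (1 + s) * A ^ s := by positivity
  have hBs : 0 ≤ (1 / 2 : ℝ) ^ (1 + s) * B ^ s := by positivity
  constructor
  · exact half_rpow_mul_le_rpow hσ₀ hA (by linarith) (by linarith)
  · exact half_rpow_mul_le_rpow hσ₀ hB (by linarith) (by linarith)

/-- The paper's `δ(τ)`. -/
noncomputable def radius (σ a δ τ : ℝ) : ℝ :=
  (1 / 2) * (1 + δ) + (1 / 2 : ℝ) ^ (2 + 1 / σ) *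
    (((1 - δ) ^ σ - τ / a) ^ (1 / σ) -
      ((1 - δ) ^ σ + ((2 : ℝ) ^ (σ + 1) - 1) * (τ / a)) ^ (1 / σ))

variable {σ a δ τ : ℝ}

lemma radius_gap_rpow_bounds (hσ : 1 ≤ σ) (ha : 0 < a) (hδ : δ < 1) (hτ₀ : 0 ≤ τ)
    (hτ : τ * ((2 : ℝ) ^ σ - 1) ≤ a * (1 - δ) ^ σ) :
    (1 / 2 : ℝ) ^ (σ + 1) * ((1 - δ) ^ σ - τ / a) ≤ (radius σ a δ τ - δ) ^ σ ∧
      (1 / 2 : ℝ) ^ (σ + 1) * ((1 - δ) ^ σ + ((2 : ℝ) ^ (σ + 1) - 1) * (τ / a)) ≤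
        (1 - radius σ a δ τ) ^ σ := by
  have hq := one_le_two_rpow_sub_one hσ
  have hτa : τ / a * ((2 : ℝ) ^ σ - 1) ≤ (1 - δ) ^ σ := by
    rw [div_mul_eq_mul_div, div_le_iff₀ ha]; linarith
  have h2 : (2 : ℝ) ^ (σ + 1) = 2 * 2 ^ σ := by rw [rpow_add two_pos, rpow_one, mul_comm]
  refine gap_rpow_bounds hσ hδ ?_ ?_ ?_ rfl
  · nlinarith [div_nonneg hτ₀ ha.le]
  · nlinarith [div_nonneg hτ₀ ha.le, rpow_nonneg (sub_pos.2 hδ).le σ]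
  · rw [h2]; linarith

lemma radius_sub_rpow_pos (hσ : 1 ≤ σ) (ha : 0 < a) (hδ : δ < 1) (hτ₀ : 0 ≤ τ)
    (hτ : τ * ((2 : ℝ) ^ σ - 1) < a * (1 - δ) ^ σ) : 0 < (radius σ a δ τ - δ) ^ σ := by
  refine lt_of_lt_of_le ?_ (radius_gap_rpow_bounds hσ ha hδ hτ₀ hτ.le).1
  have : τ / a < (1 - δ) ^ σ := by
    rw [div_lt_iff₀ ha]; nlinarith [one_le_two_rpow_sub_one hσ]
  have : (0 : ℝ) < (1 / 2) ^ (σ + 1) := by positivity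
  nlinarith

lemma div_radius_sub_rpow_le {K y : ℝ} (hσ : 1 ≤ σ) (ha : 0 < a) (hK : 0 ≤ K) (hδ : δ < 1)
    (hτ₀ : 0 ≤ τ) (hτ : τ * ((2 : ℝ) ^ σ - 1) < a * (1 - δ) ^ σ)
    (hy : y ≤ K / ((1 - radius σ a δ τ) ^ σ * √(1 - τ / (a * (1 - radius σ a δ τ) ^ σ)))) :
    y / (radius σ a δ τ - δ) ^ σ ≤
      2 ^ (2 * σ + 2) * K * a * √a / √((1 - δ) ^ σ) * (a * (1 - δ) ^ σ - τ) ^ (-(3 / 2) : ℝ) := by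
  obtain ⟨hA, hB⟩ := radius_gap_rpow_bounds hσ ha hδ hτ₀ hτ.le
  set b := (1 - δ) ^ σ
  set E : ℝ := (1 / 2) ^ (σ + 1) with hE_def
  have hb : 0 < b := rpow_pos_of_pos (sub_pos.2 hδ) σ
  have hE : 0 < E := by positivity
  have hE2 : E * 2 ^ (σ + 1) = 1 := by
    rw [hE_def, ← mul_rpow (by norm_num) (by norm_num)]; norm_num
  have hτab : τ < a * b := by nlinarith [one_le_two_rpow_sub_one hσ]
  have hL : 0 < a * b - τ := sub_pos.2 hτab
  rw [show b - τ / a = (a * b - τ) / a by field_simp] at hA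
  set P := (1 - radius σ a δ τ) ^ σ
  have hEb : E * b ≤ P := hB.trans' <| by
    gcongr
    have : (1 : ℝ) ≤ 2 ^ (σ + 1) := one_le_rpow one_le_two (by linarith)
    exact le_add_of_nonneg_right (mul_nonneg (by linarith) (div_nonneg hτ₀ ha.le))
  have hPτ : E * (a * b - τ) ≤ a * P - τ := by
    have : a * (E * (b + (2 ^ (σ + 1) - 1) * (τ / a))) - τ = E * (a * b - τ) := by
      field_simp; linear_combination τ * hE2
    nlinarith
  have hD := le_mul_sqrt_one_sub_div ha hE.le hτab.le ((mul_pos hE hb).trans_le hEb) hEb hPτ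
  calc y / (radius σ a δ τ - δ) ^ σ
      ≤ K / (E * √(b * (a * b - τ) / a)) / (E * ((a * b - τ) / a)) := by
        gcongr
        exact hy.trans (div_le_div_of_nonneg_left hK (by positivity) hD)
    _ = 2 ^ (2 * σ + 2) * K * a * √a / √b * (a * b - τ) ^ (-(3 / 2) : ℝ) := by
        rw [show (-(3 / 2) : ℝ) = -(1 + 1 / 2) by norm_num, rpow_neg hL.le, rpow_add hL, rpow_one,
          ← sqrt_eq_rpow, sqrt_div (by positivity), sqrt_mul hb.le,
          show 2 * σ + 2 = (σ + 1) * 2 by ring, rpow_mul (by norm_num), rpow_two]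
        field_simp
        linear_combination (-K * (E * 2 ^ (σ + 1) + 1)) * hE2

end Ovsyannikov

theorem ovsyannikov_integral_bound_general (σ a K δ t : ℝ) (hσ : 1 ≤ σ) (ha : 0 < a) (hK : 0 ≤ K)
    (hδ1 : δ < 1) (ht0 : 0 ≤ t)
    (ht : t < a * (1 - δ) ^ σ / ((2 : ℝ) ^ σ - 1))
    (dlt : ℝ → ℝ)
    (hdlt : ∀ τ : ℝ, dlt τ =
      (1 / 2) * (1 + δ) + (1 / 2 : ℝ) ^ (2 + 1 / σ) *
        (((1 - δ) ^ σ - τ / a) ^ (1 / σ) -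
          ((1 - δ) ^ σ + ((2 : ℝ) ^ (σ + 1) - 1) * (τ / a)) ^ (1 / σ)))
    (h : ℝ → ℝ)
    (hnn : ∀ τ ∈ Set.Icc (0 : ℝ) t, 0 ≤ h τ)
    (hbound : ∀ τ ∈ Set.Icc (0 : ℝ) t,
      h τ ≤ K / ((1 - dlt τ) ^ σ * Real.sqrt (1 - τ / (a * (1 - dlt τ) ^ σ)))) :
    ∫ τ in (0 : ℝ)..t, h τ / (dlt τ - δ) ^ σ ≤
      a * (2 : ℝ) ^ (2 * σ + 3) * K / (1 - δ) ^ σ *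
        Real.sqrt (a * (1 - δ) ^ σ / (a * (1 - δ) ^ σ - t)) := by
  obtain rfl : dlt = Ovsyannikov.radius σ a δ := funext hdlt
  have hq := one_le_two_rpow_sub_one hσ
  set b := (1 - δ) ^ σ
  have hb : 0 < b := rpow_pos_of_pos (sub_pos.2 hδ1) σ
  have htb : t * (2 ^ σ - 1) < a * b := (lt_div_iff₀ (by linarith)).1 ht
  have htab : t < a * b := by nlinarith
  have hτb : ∀ τ ∈ Icc 0 t, τ * (2 ^ σ - 1) < a * b := fun τ hτ =>
    (mul_le_mul_of_nonneg_right hτ.2 (by linarith)).trans_lt htb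
  set C := 2 ^ (2 * σ + 2) * K * a * √a / √b with hC
  calc ∫ τ in (0 : ℝ)..t, h τ / (Ovsyannikov.radius σ a δ τ - δ) ^ σ
      ≤ ∫ τ in (0 : ℝ)..t, C * (a * b - τ) ^ (-(3 / 2) : ℝ) :=
        intervalIntegral.integral_mono_on_of_nonneg ht0
          ((intervalIntegrable_sub_rpow ht0 htab).const_mul C)
          (fun τ hτ => div_nonneg (hnn τ hτ)
            (Ovsyannikov.radius_sub_rpow_pos hσ ha hδ1 hτ.1 (hτb τ hτ)).le)
          (fun τ hτ => Ovsyannikov.div_radius_sub_rpow_le hσ ha hK hδ1 hτ.1 (hτb τ hτ)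
            (hbound τ hτ))
    _ = C * ∫ τ in (0 : ℝ)..t, (a * b - τ) ^ (-(3 / 2) : ℝ) :=
        intervalIntegral.integral_const_mul _ _
    _ ≤ C * (2 / √(a * b - t)) := by
        gcongr
        exact integral_sub_rpow_neg_three_halves_le ht0 htab
    _ = a * 2 ^ (2 * σ + 3) * K / b * √(a * b / (a * b - t)) := by
        rw [hC, sqrt_div (by positivity), sqrt_mul ha.le,
          show 2 * σ + 3 = (2 * σ + 2) + 1 by ring, rpow_add_one two_ne_zero]
        field_simp
        rw [sq_sqrt hb.le]

/-- Lemma 3.5 of the paper (scalar form): if `h : [0,t] → [0,∞)` is measurable and satisfies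
`h(τ) ≤ K / ((1-δ(τ))^σ √(1 - τ/(a(1-δ(τ))^σ)))`, then
`∫₀ᵗ h(τ)/(δ(τ)-δ)^σ dτ ≤ (a 2^{2σ+3} K/(1-δ)^σ) √(a(1-δ)^σ/(a(1-δ)^σ - t))`. -/
theorem ovsyannikov_integral_bound (σ a K δ t : ℝ) (hσ : 1 ≤ σ) (ha : 0 < a) (hK : 0 ≤ K)
    (hδ0 : 0 < δ) (hδ1 : δ < 1) (ht0 : 0 ≤ t)
    (ht : t < a * (1 - δ) ^ σ / ((2 : ℝ) ^ σ - 1))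
    (dlt : ℝ → ℝ)
    (hdlt : ∀ τ : ℝ, dlt τ =
      (1 / 2) * (1 + δ) + (1 / 2 : ℝ) ^ (2 + 1 / σ) *
        (((1 - δ) ^ σ - τ / a) ^ (1 / σ) -
          ((1 - δ) ^ σ + ((2 : ℝ) ^ (σ + 1) - 1) * (τ / a)) ^ (1 / σ)))
    (h : ℝ → ℝ)
    (hmeas : AEMeasurable h (volume.restrict (Set.Icc (0 : ℝ) t)))
    (hnn : ∀ τ ∈ Set.Icc (0 : ℝ) t, 0 ≤ h τ)
    (hbound : ∀ τ ∈ Set.Icc (0 : ℝ) t,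
      h τ ≤ K / ((1 - dlt τ) ^ σ * Real.sqrt (1 - τ / (a * (1 - dlt τ) ^ σ)))) :
    ∫ τ in (0 : ℝ)..t, h τ / (dlt τ - δ) ^ σ ≤
      a * (2 : ℝ) ^ (2 * σ + 3) * K / (1 - δ) ^ σ *
        Real.sqrt (a * (1 - δ) ^ σ / (a * (1 - δ) ^ σ - t)) :=
  ovsyannikov_integral_bound_general σ a K δ t hσ ha hK hδ1 ht0 ht dlt hdlt h hnn hbound
end
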